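/- arXiv:1705.01412 — 3 statements merged into one kernel-verified Lean document; each statement's English description precedes it below -/
import Mathlib

section
/- For any integer β ≥ 2, the sum ∑_{r=1}^{β-1} 1/(4 sin²(πr/β)) equals (β² − 1)/12. -/
open Finset Complex Real
open scoped ComplexConjugate

/-!
Put `ζ = exp (2πi/β)` and `S r = ∑_{k<β} k ζ^(rk)`. Summation by parts gives `(ζ^r - 1) S r = β`
for `0 < r < β`, and `|ζ^r - 1| = 2 sin (πr/β)`, so the `r`-th term of the sum is `|S r|² / β²`.
Parseval's identity for the discrete Fourier transform gives `∑_{r<β} |S r|² = β ∑_{k<β} k²`,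
and removing the term `|S 0|² = (∑_{k<β} k)²` leaves `β² (β² - 1) / 12`.
-/

theorem geom_sum_eq_ite_of_pow_eq_one {K : Type*} [Field K] [DecidableEq K] {n : ℕ} {x : K}
    (hx : x ^ n = 1) :
    ∑ r ∈ range n, x ^ r = if x = 1 then (n : K) else 0 := by
  split_ifs with h
  · simp [h]
  · rw [geom_sum_eq h, hx, sub_self, zero_div]

theorem sub_one_mul_sum_range_natCast_mul_pow {R : Type*} [CommRing R] (x : R) (n : ℕ) :
    (x - 1) * ∑ k ∈ range n, (k : R) * x ^ k = (n - 1) * x ^ n - ∑ k ∈ range n, x ^ k + 1 := by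
  induction n with
  | zero => simp
  | succ m ih =>
    rw [sum_range_succ, sum_range_succ, mul_add, ih]
    push_cast
    ring

theorem sub_one_mul_sum_range_natCast_mul_pow_of_pow_eq_one {K : Type*} [Field K] {n : ℕ} {x : K}
    (hx : x ^ n = 1) (hx1 : x ≠ 1) : (x - 1) * ∑ k ∈ range n, (k : K) * x ^ k = n := by
  rw [sub_one_mul_sum_range_natCast_mul_pow, geom_sum_eq hx1, hx, sub_self, zero_div]
  ring

theorem IsPrimitiveRoot.sum_normSq_sum_mul_pow {ζ : ℂ} {n : ℕ} (hζ : IsPrimitiveRoot ζ n)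
    (a : ℕ → ℂ) :
    ∑ r ∈ range n, normSq (∑ k ∈ range n, a k * (ζ ^ r) ^ k) = n * ∑ k ∈ range n, normSq (a k) := by
  rcases n.eq_zero_or_pos with rfl | hn
  · simp
  have hconj : conj ζ = ζ⁻¹ := (inv_eq_conj (hζ.norm'_eq_one hn.ne')).symm
  have horth : ∀ k ∈ range n, ∀ l ∈ range n,
      ∑ r ∈ range n, (ζ ^ k * conj ζ ^ l) ^ r = if k = l then (n : ℂ) else 0 := by
    intro k hk l hl
    have hpow : (ζ ^ k * conj ζ ^ l) ^ n = 1 := by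
      rw [mul_pow, ← pow_mul, ← pow_mul, mul_comm k, mul_comm l, pow_mul, pow_mul, ← map_pow,
        hζ.pow_eq_one, map_one, one_pow, one_pow, one_mul]
    have hone : ζ ^ k * conj ζ ^ l = 1 ↔ k = l := by
      rw [hconj, inv_pow, ← div_eq_mul_inv, div_eq_one_iff_eq (pow_ne_zero _ (hζ.ne_zero hn.ne'))]
      exact ⟨fun h => hζ.pow_inj (mem_range.1 hk) (mem_range.1 hl) h, fun h => h ▸ rfl⟩
    simp only [geom_sum_eq_ite_of_pow_eq_one hpow, hone]
  apply ofReal_injective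
  push_cast
  simp_rw [← mul_conj, map_sum, map_mul, map_pow, sum_mul_sum]
  calc ∑ r ∈ range n, ∑ k ∈ range n, ∑ l ∈ range n,
        a k * (ζ ^ r) ^ k * (conj (a l) * (conj ζ ^ r) ^ l)
      = ∑ k ∈ range n, ∑ l ∈ range n,
          a k * conj (a l) * ∑ r ∈ range n, (ζ ^ k * conj ζ ^ l) ^ r := by
        rw [sum_comm]
        refine sum_congr rfl fun k _ => ?_
        rw [sum_comm]
        refine sum_congr rfl fun l _ => ?_
        rw [mul_sum]
        refine sum_congr rfl fun r _ => ?_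
        ring
    _ = n * ∑ k ∈ range n, a k * conj (a k) := by
        rw [mul_sum]
        refine sum_congr rfl fun k hk => ?_
        rw [sum_congr rfl fun l hl => by rw [horth k hk l hl]]
        simp only [mul_ite, mul_zero, sum_ite_eq, if_pos hk]
        ring

theorem normSq_exp_two_pi_I_div_pow_sub_one (n r : ℕ) :
    normSq (exp (2 * π * I / n) ^ r - 1) = 4 * Real.sin (π * r / n) ^ 2 := by
  have hexp : exp (2 * π * I / n) ^ r = exp (I * ↑(2 * π * r / n)) := by
    rw [← Complex.exp_nat_mul]
    push_cast
    ring_nf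
  rw [hexp, normSq_eq_norm_sq, norm_exp_I_mul_ofReal_sub_one, Real.norm_eq_abs, sq_abs]
  ring_nf

theorem one_div_four_mul_sin_sq_eq_normSq_div {n r : ℕ} (hr : 0 < r) (hrn : r < n) :
    1 / (4 * Real.sin (π * r / n) ^ 2) =
      normSq (∑ k ∈ range n, (k : ℂ) * (exp (2 * π * I / n) ^ r) ^ k) / n ^ 2 := by
  have hζ := isPrimitiveRoot_exp n (by omega)
  have hne : exp (2 * π * I / n) ^ r ≠ 1 := hζ.pow_ne_one_of_pos_of_lt hr.ne' hrn
  have hpow : (exp (2 * π * I / n) ^ r) ^ n = 1 := by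
    rw [← pow_mul, mul_comm r n, pow_mul, hζ.pow_eq_one, one_pow]
  have hmul := congrArg normSq (sub_one_mul_sum_range_natCast_mul_pow_of_pow_eq_one hpow hne)
  rw [map_mul, normSq_exp_two_pi_I_div_pow_sub_one, normSq_natCast] at hmul
  have hsin : 4 * Real.sin (π * r / n) ^ 2 ≠ 0 := by
    rw [← normSq_exp_two_pi_I_div_pow_sub_one]
    exact (normSq_pos.2 (sub_ne_zero.2 hne)).ne'
  have hn : (n : ℝ) ≠ 0 := by exact_mod_cast (by omega : n ≠ 0)
  rw [div_eq_div_iff hsin (pow_ne_zero 2 hn)]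
  linear_combination -hmul

theorem natCast_mul_sum_range_sq_sub_sq_sum_range (n : ℕ) :
    n * ∑ k ∈ range n, (k : ℝ) ^ 2 - (∑ k ∈ range n, (k : ℝ)) ^ 2 = n ^ 2 * (n ^ 2 - 1) / 12 := by
  have hsum : ∀ m : ℕ, ∑ k ∈ range m, (k : ℝ) = m * (m - 1) / 2 := by
    intro m
    induction m with
    | zero => simp
    | succ m ih => rw [sum_range_succ, ih]; push_cast; ring
  have hsum_sq : ∀ m : ℕ, ∑ k ∈ range m, (k : ℝ) ^ 2 = m * (m - 1) * (2 * m - 1) / 6 := by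
    intro m
    induction m with
    | zero => simp
    | succ m ih => rw [sum_range_succ, ih]; push_cast; ring
  rw [hsum, hsum_sq]
  ring

theorem stmt_2 (β : ℕ) (hβ : 2 ≤ β) :
    ∑ r ∈ Finset.Icc 1 (β - 1), 1 / (4 * Real.sin (Real.pi * r / β) ^ 2) =
      ((β : ℝ) ^ 2 - 1) / 12 := by
  set S : ℕ → ℂ := fun r => ∑ k ∈ range β, (k : ℂ) * (exp (2 * π * I / β) ^ r) ^ k
  have hIcc : Icc 1 (β - 1) = (range β).erase 0 := by
    ext r
    simp only [mem_Icc, mem_erase, mem_range]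
    omega
  have hS0 : normSq (S 0) = (∑ k ∈ range β, (k : ℝ)) ^ 2 := by
    rw [show S 0 = ((∑ k ∈ range β, (k : ℝ) : ℝ) : ℂ) by simp [S], normSq_ofReal, sq]
  have hParseval := (isPrimitiveRoot_exp β (by omega)).sum_normSq_sum_mul_pow (fun k => k)
  simp only [normSq_natCast, ← sq] at hParseval
  calc ∑ r ∈ Icc 1 (β - 1), 1 / (4 * Real.sin (π * r / β) ^ 2)
      = (∑ r ∈ range β, normSq (S r) - normSq (S 0)) / β ^ 2 := by
        rw [← sum_erase_eq_sub (mem_range.2 (by omega)), sum_div, hIcc]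
        exact sum_congr rfl fun r hr => one_div_four_mul_sin_sq_eq_normSq_div
          (Nat.pos_of_ne_zero (ne_of_mem_erase hr)) (mem_range.1 (mem_of_mem_erase hr))
    _ = ((β : ℝ) ^ 2 - 1) / 12 := by
        rw [hParseval, hS0, natCast_mul_sum_range_sq_sub_sq_sum_range]
        field_simp
end

section
/- For any integer β ≥ 2, the sum ∑_{r=1}^{β-1} 1/sin⁴(πr/β) equals (β⁴ + 10β² − 11)/45. -/
/-!
Since `(cot θ ± i) sin θ = e^{±iθ}`, the numbers `cot (π r / β)`, `1 ≤ r ≤ β - 1`, are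
`β - 1` distinct roots of `(X + i)^β - (X - i)^β`, a polynomial of degree `β - 1`. Vieta's
formulas read their elementary symmetric functions off binomial coefficients (the odd ones
vanish), Newton's identities turn these into `∑ cot²` and `∑ cot⁴`, and
`1 / sin⁴ = (1 + cot²)²`.
-/

open Finset Polynomial Complex

section
variable {σ R : Type*} [CommRing R] (s : Finset σ) (f : σ → R)

theorem Finset.sum_pow_eq_esymm_sub_sum (k : ℕ) (hk : 0 < k) :
    ∑ i ∈ s, f i ^ k = (-1) ^ (k + 1) * k * (s.val.map f).esymm k -
      ∑ a ∈ antidiagonal k with a.1 ∈ Set.Ioo 0 k,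
        (-1) ^ a.1 * (s.val.map f).esymm a.1 * ∑ i ∈ s, f i ^ a.2 := by
  classical
  have h := congrArg (MvPolynomial.aeval fun i : s ↦ f i)
    (MvPolynomial.psum_eq_mul_esymm_sub_sum s R k hk)
  have hesymm (n : ℕ) : MvPolynomial.aeval (fun i : s ↦ f i) (MvPolynomial.esymm s R n) =
      (s.val.map f).esymm n := by
    rw [MvPolynomial.aeval_esymm_eq_multiset_esymm, univ_eq_attach, attach_val]
    exact congrArg (Multiset.esymm · n) (Multiset.attach_map_val' s.val f)
  have hpsum (n : ℕ) : MvPolynomial.aeval (fun i : s ↦ f i) (MvPolynomial.psum s R n) =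
      ∑ i ∈ s, f i ^ n := by
    simp [MvPolynomial.psum, sum_attach s fun i ↦ f i ^ n]
  simpa only [map_sub, map_mul, map_sum, map_pow, map_neg, map_one, map_natCast,
    hesymm, hpsum] using h

theorem Finset.sum_sq_eq_of_esymm_one_eq_zero (h₁ : (s.val.map f).esymm 1 = 0) :
    ∑ i ∈ s, f i ^ 2 = -2 * (s.val.map f).esymm 2 := by
  have hindex : {a ∈ antidiagonal 2 | a.1 ∈ Set.Ioo 0 2} = {(1, 1)} := by decide
  rw [sum_pow_eq_esymm_sub_sum s f 2 two_pos, hindex, sum_singleton, h₁]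
  ring

theorem Finset.sum_pow_four_eq_of_esymm_one_three_eq_zero (h₁ : (s.val.map f).esymm 1 = 0)
    (h₃ : (s.val.map f).esymm 3 = 0) :
    ∑ i ∈ s, f i ^ 4 = 2 * (s.val.map f).esymm 2 ^ 2 - 4 * (s.val.map f).esymm 4 := by
  have hindex : {a ∈ antidiagonal 4 | a.1 ∈ Set.Ioo 0 4} = {(1, 3), (2, 2), (3, 1)} := by decide
  rw [sum_pow_eq_esymm_sub_sum s f 4 four_pos, hindex, sum_insert (by decide),
    sum_insert (by decide), sum_singleton, h₁, h₃, sum_sq_eq_of_esymm_one_eq_zero s f h₁]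
  ring

end

theorem Nat.cast_choose_three {K : Type*} [Field K] [CharZero K] (n : ℕ) :
    (n.choose 3 : K) = n * (n - 1) * (n - 2) / 6 := by
  rw [Nat.cast_choose_eq_descPochhammer_div]
  simp [descPochhammer_succ_right, Nat.factorial]

theorem Nat.cast_choose_five {K : Type*} [Field K] [CharZero K] (n : ℕ) :
    (n.choose 5 : K) = n * (n - 1) * (n - 2) * (n - 3) * (n - 4) / 120 := by
  rw [Nat.cast_choose_eq_descPochhammer_div]
  simp [descPochhammer_succ_right, Nat.factorial]

theorem Polynomial.coeff_X_add_C_pow_sub_X_sub_C_pow {R : Type*} [CommRing R] (a : R)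
    (n k : ℕ) :
    ((X + C a) ^ n - (X - C a) ^ n).coeff k = n.choose k * (a ^ (n - k) - (-a) ^ (n - k)) := by
  rw [coeff_sub, sub_eq_add_neg X, ← C_neg, coeff_X_add_C_pow, coeff_X_add_C_pow]
  ring

noncomputable def cotPolynomial (n : ℕ) : ℂ[X] := (X + C I) ^ n - (X - C I) ^ n

theorem coeff_cotPolynomial (n k : ℕ) :
    (cotPolynomial n).coeff k = n.choose k * (I ^ (n - k) - (-I) ^ (n - k)) :=
  coeff_X_add_C_pow_sub_X_sub_C_pow I n k

theorem coeff_cotPolynomial_sub_one {n : ℕ} (hn : 0 < n) :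
    (cotPolynomial n).coeff (n - 1) = 2 * I * n := by
  rw [coeff_cotPolynomial, Nat.sub_sub_self hn, Nat.choose_symm hn, Nat.choose_one_right]
  ring

theorem natDegree_cotPolynomial {n : ℕ} (hn : 0 < n) : (cotPolynomial n).natDegree = n - 1 := by
  refine natDegree_eq_of_le_of_coeff_ne_zero ?_ (by simp [coeff_cotPolynomial_sub_one hn, hn.ne'])
  rw [natDegree_le_iff_coeff_eq_zero]
  intro m hm
  rcases (show n ≤ m by omega).eq_or_lt with rfl | hlt
  · simp [coeff_cotPolynomial]
  · simp [coeff_cotPolynomial, Nat.choose_eq_zero_of_lt hlt]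

theorem leadingCoeff_cotPolynomial {n : ℕ} (hn : 0 < n) :
    (cotPolynomial n).leadingCoeff = 2 * I * n := by
  rw [leadingCoeff, natDegree_cotPolynomial hn, coeff_cotPolynomial_sub_one hn]

theorem Complex.cot_add_I_pow_eq_cot_sub_I_pow {z : ℂ} (hz : sin z ≠ 0) {n : ℕ}
    (hnz : sin (n * z) = 0) : (cot z + I) ^ n = (cot z - I) ^ n := by
  have hplus : (cot z + I) * sin z = cos z + sin z * I := by
    rw [add_mul, cot_eq_cos_div_sin, div_mul_cancel₀ _ hz, mul_comm]
  have hminus : (cot z - I) * sin z = cos (-z) + sin (-z) * I := by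
    rw [sub_mul, cot_eq_cos_div_sin, div_mul_cancel₀ _ hz, cos_neg, sin_neg]
    ring
  have key : ((cot z + I) * sin z) ^ n = ((cot z - I) * sin z) ^ n := by
    rw [hplus, hminus, cos_add_sin_mul_I_pow, cos_add_sin_mul_I_pow, mul_neg, cos_neg, sin_neg,
      hnz, neg_zero]
  rwa [mul_pow, mul_pow, mul_left_inj' (pow_ne_zero n hz)] at key

theorem Real.injOn_cot : Set.InjOn Real.cot (Set.Ioo 0 Real.pi) := by
  intro a ⟨ha₀, haπ⟩ b ⟨hb₀, hbπ⟩ hab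
  have hsa := Real.sin_pos_of_pos_of_lt_pi ha₀ haπ
  have hsb := Real.sin_pos_of_pos_of_lt_pi hb₀ hbπ
  rw [Real.cot_eq_cos_div_sin, Real.cot_eq_cos_div_sin, div_eq_div_iff hsa.ne' hsb.ne'] at hab
  have hsin : Real.sin (b - a) = 0 := by rw [Real.sin_sub]; linarith
  have := (Real.sin_eq_zero_iff_of_lt_of_lt (by linarith) (by linarith)).mp hsin
  linarith

theorem pi_mul_div_mem_Ioo {n r : ℕ} (hr : r ∈ Icc 1 (n - 1)) :
    Real.pi * r / n ∈ Set.Ioo 0 Real.pi := by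
  obtain ⟨hr₁, hrn⟩ := mem_Icc.mp hr
  have hr₀ : (0 : ℝ) < r := by exact_mod_cast hr₁
  have hrn : (r : ℝ) < n := by exact_mod_cast (show r < n by omega)
  have hn : (0 : ℝ) < n := hr₀.trans hrn
  constructor
  · positivity
  · rw [div_lt_iff₀ hn]; nlinarith [Real.pi_pos]

noncomputable def cotValues (n : ℕ) : Multiset ℂ :=
  (Icc 1 (n - 1)).val.map fun r : ℕ ↦ (Real.cot (Real.pi * r / n) : ℂ)

theorem roots_cotPolynomial {n : ℕ} (hn : 0 < n) : (cotPolynomial n).roots = cotValues n := by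
  have hne : cotPolynomial n ≠ 0 := fun h ↦ by
    simpa [h, hn.ne'] using coeff_cotPolynomial_sub_one hn
  have hnodup : (cotValues n).Nodup := by
    refine (Icc 1 (n - 1)).nodup.map_on fun r hr s hs hrs ↦ ?_
    have hθ := Real.injOn_cot (pi_mul_div_mem_Ioo (mem_val.mp hr))
      (pi_mul_div_mem_Ioo (mem_val.mp hs)) (Complex.ofReal_injective hrs)
    have hn' : (n : ℝ) ≠ 0 := by exact_mod_cast hn.ne'
    field_simp at hθ
    exact_mod_cast hθ
  have hsub : cotValues n ≤ (cotPolynomial n).roots := by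
    rw [Multiset.le_iff_subset hnodup]
    intro x hx
    obtain ⟨r, hr, rfl⟩ := Multiset.mem_map.mp hx
    have hθ := pi_mul_div_mem_Ioo (mem_val.mp hr)
    have hsin : sin (Real.pi * r / n : ℝ) ≠ 0 := by
      exact_mod_cast (Real.sin_pos_of_pos_of_lt_pi hθ.1 hθ.2).ne'
    have hnsin : sin (n * (Real.pi * r / n : ℝ)) = 0 := by
      have hn' : (n : ℂ) ≠ 0 := by exact_mod_cast hn.ne'
      push_cast
      rw [mul_div_cancel₀ _ hn', mul_comm]
      exact_mod_cast Real.sin_nat_mul_pi r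
    rw [mem_roots hne, IsRoot, cotPolynomial, ofReal_cot]
    simp only [eval_sub, eval_pow, eval_add, eval_X, eval_C]
    rw [cot_add_I_pow_eq_cot_sub_I_pow hsin hnsin, sub_self]
  refine (Multiset.eq_of_le_of_card_le hsub ?_).symm
  simpa [cotValues, natDegree_cotPolynomial hn] using card_roots' (cotPolynomial n)

theorem card_cotValues (n : ℕ) : Multiset.card (cotValues n) = n - 1 := by
  simp [cotValues]

theorem mul_esymm_cotValues {n : ℕ} (hn : 0 < n) (k : ℕ) :
    2 * I * n * (-1) ^ k * (cotValues n).esymm k =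
      n.choose (k + 1) * (I ^ (k + 1) - (-I) ^ (k + 1)) := by
  rcases le_or_gt k (n - 1) with hk | hk
  · have hroots : Multiset.card (cotPolynomial n).roots = (cotPolynomial n).natDegree := by
      rw [roots_cotPolynomial hn, card_cotValues, natDegree_cotPolynomial hn]
    have h := coeff_eq_esymm_roots_of_card hroots (k := n - 1 - k)
      (by rw [natDegree_cotPolynomial hn]; omega)
    rw [coeff_cotPolynomial, leadingCoeff_cotPolynomial hn, natDegree_cotPolynomial hn,
      roots_cotPolynomial hn, Nat.sub_sub_self hk,
      Nat.choose_symm_of_eq_add (show n = n - 1 - k + (k + 1) by omega),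
      show n - (n - 1 - k) = k + 1 by omega] at h
    rw [h]
  · rw [Multiset.esymm, Multiset.powersetCard_eq_empty _ (by rw [card_cotValues]; omega),
      Nat.choose_eq_zero_of_lt (by omega)]
    simp

theorem esymm_one_cotValues {n : ℕ} (hn : 0 < n) : (cotValues n).esymm 1 = 0 := by
  have h := mul_esymm_cotValues hn 1
  have hn' : (n : ℂ) ≠ 0 := by exact_mod_cast hn.ne'
  simpa [hn', I_ne_zero] using h

theorem esymm_three_cotValues {n : ℕ} (hn : 0 < n) : (cotValues n).esymm 3 = 0 := by
  have h := mul_esymm_cotValues hn 3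
  have hn' : (n : ℂ) ≠ 0 := by exact_mod_cast hn.ne'
  simpa [hn', I_ne_zero, pow_succ] using h

theorem esymm_two_cotValues {n : ℕ} (hn : 0 < n) :
    (cotValues n).esymm 2 = -((n - 1) * (n - 2) / 6) := by
  have h := mul_esymm_cotValues hn 2
  rw [Nat.cast_choose_three] at h
  have hn' : (n : ℂ) ≠ 0 := by exact_mod_cast hn.ne'
  refine mul_left_cancel₀ (mul_ne_zero (mul_ne_zero two_ne_zero I_ne_zero) hn') ?_
  linear_combination h + n * (n - 1) * (n - 2) / 3 * I * I_sq

theorem esymm_four_cotValues {n : ℕ} (hn : 0 < n) :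
    (cotValues n).esymm 4 = (n - 1) * (n - 2) * (n - 3) * (n - 4) / 120 := by
  have h := mul_esymm_cotValues hn 4
  rw [Nat.cast_choose_five] at h
  have hn' : (n : ℂ) ≠ 0 := by exact_mod_cast hn.ne'
  refine mul_left_cancel₀ (mul_ne_zero (mul_ne_zero two_ne_zero I_ne_zero) hn') ?_
  linear_combination
    h + n * (n - 1) * (n - 2) * (n - 3) * (n - 4) / 60 * I * (I ^ 2 - 1) * I_sq

theorem sum_cot_sq {n : ℕ} (hn : 0 < n) :
    ∑ r ∈ Icc 1 (n - 1), Real.cot (Real.pi * r / n) ^ 2 = ((n : ℝ) - 1) * (n - 2) / 3 := by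
  have h := Finset.sum_sq_eq_of_esymm_one_eq_zero _ _ (esymm_one_cotValues hn)
  rw [← cotValues, esymm_two_cotValues hn] at h
  apply Complex.ofReal_injective
  push_cast at h ⊢
  rw [h]
  ring

theorem sum_cot_pow_four {n : ℕ} (hn : 0 < n) :
    ∑ r ∈ Icc 1 (n - 1), Real.cot (Real.pi * r / n) ^ 4 =
      ((n : ℝ) - 1) * (n - 2) * (n ^ 2 + 3 * n - 13) / 45 := by
  have h := Finset.sum_pow_four_eq_of_esymm_one_three_eq_zero _ _ (esymm_one_cotValues hn)
    (esymm_three_cotValues hn)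
  rw [← cotValues, esymm_two_cotValues hn, esymm_four_cotValues hn] at h
  apply Complex.ofReal_injective
  push_cast at h ⊢
  rw [h]
  ring

theorem Real.inv_sin_sq_eq_one_add_cot_sq {x : ℝ} (hx : Real.sin x ≠ 0) :
    (Real.sin x ^ 2)⁻¹ = 1 + Real.cot x ^ 2 := by
  rw [Real.cot_eq_cos_div_sin]
  field_simp
  linarith [Real.sin_sq_add_cos_sq x]

theorem stmt_3 (β : ℕ) (hβ : 2 ≤ β) :
    ∑ r ∈ Finset.Icc 1 (β - 1), 1 / Real.sin (Real.pi * r / β) ^ 4 =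
      ((β : ℝ) ^ 4 + 10 * (β : ℝ) ^ 2 - 11) / 45 := by
  have hβ₀ : 0 < β := by omega
  have hterm : ∀ r ∈ Icc 1 (β - 1), 1 / Real.sin (Real.pi * r / β) ^ 4 =
      1 + 2 * Real.cot (Real.pi * r / β) ^ 2 + Real.cot (Real.pi * r / β) ^ 4 := by
    intro r hr
    have hθ := pi_mul_div_mem_Ioo hr
    have hsin := (Real.sin_pos_of_pos_of_lt_pi hθ.1 hθ.2).ne'
    rw [one_div, show 4 = 2 * 2 from rfl, pow_mul, ← inv_pow,
      Real.inv_sin_sq_eq_one_add_cot_sq hsin]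
    ring
  rw [sum_congr rfl hterm, sum_add_distrib, sum_add_distrib, ← mul_sum, sum_cot_sq hβ₀,
    sum_cot_pow_four hβ₀, sum_const, Nat.card_Icc, nsmul_one, Nat.add_sub_cancel,
    Nat.cast_pred hβ₀]
  ring
end

section
/- Let q be a positive integer, x, y coprime positive integers with x < y, both dividing q, and let q_{/x} = q/x. For integers j, k, the congruence (j − k)·p·y·q_{/x} + 2x ≡ 0 (mod q) implies y divides 2x, which is impossible; hence the congruence has no solution. -/
theorem stmt_8 (q x y p : ℕ) (hq : 0 < q) (hxq : x ∣ q) (hyq : y ∣ q)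
    (hxy : Nat.gcd x y = 1) (hx : 1 < x) (hxy' : x < y)
    (hpyx : Nat.gcd (p * y) x = 1) (j k : ℤ) :
    ¬ (q : ℤ) ∣ ((j - k) * (p : ℤ) * (y : ℤ) * ((q / x : ℕ) : ℤ) + 2 * (x : ℤ)) := by
  intro h
  have hyq' : (y : ℤ) ∣ (q : ℤ) := Int.natCast_dvd_natCast.mpr hyq
  have h1 : (y : ℤ) ∣ ((j - k) * (p : ℤ) * (y : ℤ) * ((q / x : ℕ) : ℤ) + 2 * (x : ℤ)) :=
    hyq'.trans h
  have h2 : (y : ℤ) ∣ (j - k) * (p : ℤ) * (y : ℤ) * ((q / x : ℕ) : ℤ) :=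
    ⟨(j - k) * p * ((q / x : ℕ) : ℤ), by ring⟩
  have h3 : (y : ℤ) ∣ 2 * (x : ℤ) := (dvd_add_right h2).mp h1
  have h4 : y ∣ 2 * x := by exact_mod_cast h3
  have hcop : Nat.Coprime y x := (Nat.coprime_comm.mp hxy)
  have h5 : y ∣ 2 := (Nat.Coprime.dvd_of_dvd_mul_right hcop h4)
  have := Nat.le_of_dvd (by norm_num) h5
  omega
end
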